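/- Let K be a linearly ordered field, n ≥ 2, let v and w be totally positive upper triangular n×n matrices over K of determinant one, and let x_1, …, x_n ∈ K all be strictly positive. Set y_i = (v⁻¹)_{i,n} and z_i = ((w·v)⁻¹)_{i,n} for i = 1, …, n. Then all y_i and z_i are nonzero, and for every a = 1, …, n−1: −(x_{a+1} · y_a)/(x_a · y_{a+1}) < −(x_{a+1} · z_a)/(x_a · z_{a+1}). (This is the coordinate form of the inequality D_a(F_1, F_3, F_2, F_4) < D_a(F_1, F_3, F_2, F_5) between the a-th double ratios of a positive 5-tuple of flags (F_1, …, F_5), written in a basis whose ascending flag is F_1 and descending flag is F_3, with F_2 = uF_1 for u totally positive lower triangular with first column x, F_4 = v⁻¹F_3 and F_5 = v⁻¹w⁻¹F_3.) -/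

import Mathlib

/-!
Conjugate inverses by `J = diag(1, -1, 1, …)`. By the cofactor formula the entries of `J v⁻¹ J`
are `(det v)⁻¹` times minors of `v`, and by Jacobi's complementary minor identity so are its
`2 × 2` minors; total positivity of `v` (together with triangularity, which kills the minors it
does not control) makes all of them nonnegative, and positive in the expected positions.
Up to alternating signs, `y` is the last column of `T = J v⁻¹ J` and `z` the last column of
`T U` with `U = J w⁻¹ J`. The double ratio inequality then says `T_{a,n} (TU)_{a+1,n} <
(TU)_{a,n} T_{a+1,n}`, and the difference of the two sides is `∑_k U_{k,n}` times the minor of `T`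
on rows `a, a+1` and columns `k, n`: a sum of nonnegative terms whose `k = a` term is positive.
-/

/-- An upper triangular matrix is totally positive upper triangular if every minor on rows
`i₁ < … < i_p` and columns `j₁ < … < j_p` with `i_k ≤ j_k` for all `k` is strictly positive. -/
def IsTotallyPositiveUpper {K : Type*} [Field K] [LinearOrder K] [IsStrictOrderedRing K] {n : ℕ}
    (A : Matrix (Fin n) (Fin n) K) : Prop :=
  (∀ i j : Fin n, j < i → A i j = 0) ∧
  ∀ (p : ℕ) (r c : Fin p → Fin n), StrictMono r → StrictMono c → (∀ k, r k ≤ c k) →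
    0 < (A.submatrix r c).det

open Matrix

lemma neg_one_pow_mul_self {R : Type*} [CommRing R] (k : ℕ) : (-1 : R) ^ k * (-1) ^ k = 1 := by
  rw [← mul_pow, neg_one_mul, neg_neg, one_pow]

lemma Fin.antitone_succAbove_left {n : ℕ} (i : Fin n) :
    Antitone fun p : Fin (n + 1) => p.succAbove i := by
  intro p q h
  dsimp only
  rcases lt_or_ge i.castSucc q with hq | hq
  · rw [succAbove_of_castSucc_lt _ _ hq]
    rcases lt_or_ge i.castSucc p with hp | hp
    · rw [succAbove_of_castSucc_lt _ _ hp]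
    · rw [succAbove_of_le_castSucc _ _ hp]
      exact castSucc_lt_succ.le
  · rw [succAbove_of_le_castSucc _ _ hq, succAbove_of_le_castSucc _ _ (h.trans hq)]

namespace Matrix
variable {R : Type*} [CommRing R]

lemma det_updateCol_updateCol_one {n : Type*} [Fintype n] [DecidableEq n] {i k : n} (hik : i ≠ k)
    (p q : n → R) :
    (((1 : Matrix n n R).updateCol i p).updateCol k q).det = p i * q k - p k * q i := by
  -- a rank-two perturbation `1 + U V` of the identity, whose determinant is that of `1 + V U`
  let U : Matrix n (Fin 2) R :=
    of fun r => ![p r - (Pi.single i 1 : n → R) r, q r - (Pi.single k 1 : n → R) r]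
  let V : Matrix (Fin 2) n R := of ![(Pi.single i 1 : n → R), Pi.single k 1]
  have hUV : ((1 : Matrix n n R).updateCol i p).updateCol k q = 1 + U * V := by
    ext r c
    simp only [updateCol_apply, add_apply, mul_apply, Fin.sum_univ_two, U, V, of_apply,
      cons_val_zero, cons_val_one, one_apply, Pi.single_apply]
    split_ifs <;> simp_all
  rw [hUV, det_one_add_mul_comm, det_fin_two]
  simp [U, V, Pi.single_apply, hik, hik.symm, mul_comm]

lemma det_updateCol_single {m : ℕ} (A : Matrix (Fin (m + 1)) (Fin (m + 1)) R)
    (i j : Fin (m + 1)) :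
    (A.updateCol j (Pi.single i 1)).det =
      (-1) ^ ((i : ℕ) + j) * (A.submatrix i.succAbove j.succAbove).det := by
  rw [det_succ_column _ j, Fintype.sum_eq_single i]
  · simp
  · intro k hk
    simp [hk]

lemma BlockTriangular.det_submatrix_eq_zero {α : Type*} [LinearOrder α] {A : Matrix α α R}
    (hA : A.BlockTriangular id) {p : ℕ} {r c : Fin p → α} (hr : Monotone r) (hc : Monotone c)
    {k : Fin p} (hk : c k < r k) : (A.submatrix r c).det = 0 := by
  rw [det_apply]
  refine Finset.sum_eq_zero fun σ _ => ?_
  -- `σ` cannot map the `k + 1` indices `≤ k` injectively into the `k` indices `< k`.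
  obtain ⟨q, hqk, hkq⟩ : ∃ q ≤ k, k ≤ σ q := by
    by_contra! h
    obtain ⟨x, -, y, -, hxy, hσ⟩ := Finset.exists_ne_map_eq_of_card_lt_of_maps_to
      (s := Finset.Iic k) (t := Finset.Iio k) (by simp) (f := σ)
      (fun q hq => by simpa using h q (by simpa using hq))
    exact hxy (σ.injective hσ)
  rw [Finset.prod_eq_zero (Finset.mem_univ q) (hA ((hc hqk).trans_lt (hk.trans_le (hr hkq)))),
    smul_zero]

end Matrix

section AltSignConj
variable {R : Type*} [CommRing R] {n : ℕ}

def altSignConj (M : Matrix (Fin n) (Fin n) R) : Matrix (Fin n) (Fin n) R :=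
  diagonal (fun i : Fin n => (-1 : R) ^ (i : ℕ)) * M *
    diagonal (fun i : Fin n => (-1 : R) ^ (i : ℕ))

lemma altSignConj_apply (M : Matrix (Fin n) (Fin n) R) (i j : Fin n) :
    altSignConj M i j = (-1) ^ (i : ℕ) * M i j * (-1) ^ (j : ℕ) := by
  simp [altSignConj]

lemma altSignConj_mul (A B : Matrix (Fin n) (Fin n) R) :
    altSignConj (A * B) = altSignConj A * altSignConj B := by
  ext i j
  simp only [altSignConj_apply, mul_apply, Finset.mul_sum, Finset.sum_mul]
  refine Finset.sum_congr rfl fun k _ => ?_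
  linear_combination -(-1) ^ (i : ℕ) * A i k * B k j * (-1) ^ (j : ℕ) *
    neg_one_pow_mul_self (R := R) k

lemma altSignConj_altSignConj (M : Matrix (Fin n) (Fin n) R) :
    altSignConj (altSignConj M) = M := by
  ext i j
  simp only [altSignConj_apply]
  linear_combination M i j * (-1) ^ (j : ℕ) * (-1) ^ (j : ℕ) * neg_one_pow_mul_self (R := R) i +
    M i j * neg_one_pow_mul_self (R := R) j

end AltSignConj

section AltSignConjInv
variable {K : Type*} [Field K]

lemma altSignConj_inv_apply {m : ℕ} (M : Matrix (Fin (m + 1)) (Fin (m + 1)) K)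
    (i j : Fin (m + 1)) :
    altSignConj M⁻¹ i j = M.det⁻¹ * (M.submatrix j.succAbove i.succAbove).det := by
  rw [altSignConj_apply, inv_def, Matrix.smul_apply, adjugate_fin_succ_eq_det_submatrix,
    Ring.inverse_eq_inv, smul_eq_mul, pow_add]
  linear_combination M.det⁻¹ * (M.submatrix j.succAbove i.succAbove).det *
    ((-1) ^ (i : ℕ) * (-1) ^ (i : ℕ) * neg_one_pow_mul_self (R := K) j +
      neg_one_pow_mul_self (R := K) i)

/-- Jacobi's identity for `2 × 2` minors of an inverse. The matrix `M` with columns `i₁, i₂`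
replaced by the unit vectors `e_{j₁}, e_{j₂}` is `M` times the identity with the same columns
replaced by columns `j₁, j₂` of `M⁻¹`; expand both determinants. -/
lemma altSignConj_inv_minor {m : ℕ} {M : Matrix (Fin (m + 2)) (Fin (m + 2)) K} (hM : M.det ≠ 0)
    {i₁ i₂ j₁ j₂ : Fin (m + 2)} (hi : i₁ < i₂) (hj : j₁ < j₂) :
    altSignConj M⁻¹ i₁ j₁ * altSignConj M⁻¹ i₂ j₂ - altSignConj M⁻¹ i₁ j₂ * altSignConj M⁻¹ i₂ j₁ =
      M.det⁻¹ * (M.submatrix (j₂.succAbove ∘ (j₁.castPred (Fin.ne_last_of_lt hj)).succAbove)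
        (i₂.succAbove ∘ (i₁.castPred (Fin.ne_last_of_lt hi)).succAbove)).det := by
  set i₁' := i₁.castPred (Fin.ne_last_of_lt hi)
  set j₁' := j₁.castPred (Fin.ne_last_of_lt hj)
  set S := M.submatrix (j₂.succAbove ∘ j₁'.succAbove) (i₂.succAbove ∘ i₁'.succAbove)
  have hi₁ : i₂.succAbove i₁' = i₁ := Fin.succAbove_castPred_of_lt _ _ hi
  have hj₁ : j₂.succAbove j₁' = j₁ := Fin.succAbove_castPred_of_lt _ _ hj
  have hcol (j : Fin (m + 2)) : M *ᵥ M⁻¹.col j = Pi.single j 1 := by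
    rw [← mulVec_single_one, mulVec_mulVec, mul_nonsing_inv _ hM.isUnit, one_mulVec]
  have hprod : M * ((1 : Matrix _ _ K).updateCol i₁ (M⁻¹.col j₁)).updateCol i₂ (M⁻¹.col j₂) =
      (M.updateCol i₁ (Pi.single j₁ 1)).updateCol i₂ (Pi.single j₂ 1) := by
    rw [mul_updateCol, mul_updateCol, Matrix.mul_one, hcol, hcol]
  have hsub : (M.updateCol i₁ (Pi.single j₁ 1)).submatrix j₂.succAbove i₂.succAbove =
      (M.submatrix j₂.succAbove i₂.succAbove).updateCol i₁' (Pi.single j₁' 1) := by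
    ext r s
    simp only [submatrix_apply, updateCol_apply, Pi.single_apply, ← hi₁, ← hj₁,
      Fin.succAbove_right_inj]
  have hdet : M.det * (M⁻¹ i₁ j₁ * M⁻¹ i₂ j₂ - M⁻¹ i₁ j₂ * M⁻¹ i₂ j₁) =
      (-1) ^ ((j₂ : ℕ) + i₂) * ((-1) ^ ((j₁ : ℕ) + i₁) * S.det) := by
    have h := congrArg det hprod
    rw [det_mul, det_updateCol_updateCol_one hi.ne, det_updateCol_single, hsub,
      det_updateCol_single, submatrix_submatrix, col_apply, col_apply, col_apply, col_apply,
      mul_comm (M⁻¹ i₂ j₁)] at h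
    exact h
  rw [eq_inv_mul_iff_mul_eq₀ hM]
  simp only [altSignConj_apply]
  linear_combination (-1) ^ ((i₁ : ℕ) + i₂ + j₁ + j₂) * hdet +
    S.det * neg_one_pow_mul_self (R := K) ((i₁ : ℕ) + i₂ + j₁ + j₂)

end AltSignConjInv

namespace IsTotallyPositiveUpper
variable {K : Type*} [Field K] [LinearOrder K] [IsStrictOrderedRing K]

lemma det_pos {n : ℕ} {A : Matrix (Fin n) (Fin n) K} (hA : IsTotallyPositiveUpper A) :
    0 < A.det := by
  simpa using hA.2 n id id strictMono_id strictMono_id fun _ => le_rfl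

lemma det_submatrix_nonneg {n p : ℕ} {A : Matrix (Fin n) (Fin n) K}
    (hA : IsTotallyPositiveUpper A) {r c : Fin p → Fin n} (hr : StrictMono r)
    (hc : StrictMono c) : 0 ≤ (A.submatrix r c).det := by
  by_cases h : ∀ k, r k ≤ c k
  · exact (hA.2 p r c hr hc h).le
  · obtain ⟨k, hk⟩ := not_forall.1 h
    exact (BlockTriangular.det_submatrix_eq_zero (fun i j h => hA.1 i j h)
      hr.monotone hc.monotone (not_le.1 hk)).ge

variable {m : ℕ}

lemma altSignConj_inv_nonneg {A : Matrix (Fin (m + 1)) (Fin (m + 1)) K}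
    (hA : IsTotallyPositiveUpper A) (i j : Fin (m + 1)) : 0 ≤ altSignConj A⁻¹ i j := by
  rw [altSignConj_inv_apply]
  exact mul_nonneg (inv_nonneg.2 hA.det_pos.le)
    (hA.det_submatrix_nonneg (Fin.strictMono_succAbove _) (Fin.strictMono_succAbove _))

lemma altSignConj_inv_pos {A : Matrix (Fin (m + 1)) (Fin (m + 1)) K}
    (hA : IsTotallyPositiveUpper A) {i j : Fin (m + 1)} (hij : i ≤ j) :
    0 < altSignConj A⁻¹ i j := by
  rw [altSignConj_inv_apply]
  exact mul_pos (inv_pos.2 hA.det_pos) (hA.2 _ _ _ (Fin.strictMono_succAbove _)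
    (Fin.strictMono_succAbove _) fun k => Fin.antitone_succAbove_left k hij)

lemma altSignConj_inv_minor_nonneg {A : Matrix (Fin (m + 2)) (Fin (m + 2)) K}
    (hA : IsTotallyPositiveUpper A) {i₁ i₂ j₁ j₂ : Fin (m + 2)} (hi : i₁ < i₂) (hj : j₁ ≤ j₂) :
    0 ≤ altSignConj A⁻¹ i₁ j₁ * altSignConj A⁻¹ i₂ j₂ -
      altSignConj A⁻¹ i₁ j₂ * altSignConj A⁻¹ i₂ j₁ := by
  rcases hj.eq_or_lt with rfl | hj
  · rw [mul_comm, sub_self]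
  rw [altSignConj_inv_minor hA.det_pos.ne' hi hj]
  exact mul_nonneg (inv_nonneg.2 hA.det_pos.le) (hA.det_submatrix_nonneg
    ((Fin.strictMono_succAbove _).comp (Fin.strictMono_succAbove _))
    ((Fin.strictMono_succAbove _).comp (Fin.strictMono_succAbove _)))

lemma altSignConj_inv_minor_pos {A : Matrix (Fin (m + 2)) (Fin (m + 2)) K}
    (hA : IsTotallyPositiveUpper A) {i₁ i₂ j₁ j₂ : Fin (m + 2)} (hi : i₁ < i₂) (hj : j₁ < j₂)
    (h₁ : i₁ ≤ j₁) (h₂ : i₂ ≤ j₂) :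
    0 < altSignConj A⁻¹ i₁ j₁ * altSignConj A⁻¹ i₂ j₂ -
      altSignConj A⁻¹ i₁ j₂ * altSignConj A⁻¹ i₂ j₁ := by
  rw [altSignConj_inv_minor hA.det_pos.ne' hi hj]
  refine mul_pos (inv_pos.2 hA.det_pos) (hA.2 _ _ _
    ((Fin.strictMono_succAbove _).comp (Fin.strictMono_succAbove _))
    ((Fin.strictMono_succAbove _).comp (Fin.strictMono_succAbove _)) fun k => ?_)
  calc j₂.succAbove ((j₁.castPred _).succAbove k)
      ≤ j₂.succAbove ((i₁.castPred _).succAbove k) :=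
        Fin.succAbove_le_succAbove_iff.2 (Fin.antitone_succAbove_left k h₁)
    _ ≤ i₂.succAbove ((i₁.castPred _).succAbove k) := Fin.antitone_succAbove_left _ h₂

lemma altSignConj_inv_mul_apply_last_pos {v w : Matrix (Fin (m + 1)) (Fin (m + 1)) K}
    (hv : IsTotallyPositiveUpper v) (hw : IsTotallyPositiveUpper w) (i : Fin (m + 1)) :
    0 < (altSignConj v⁻¹ * altSignConj w⁻¹) i (Fin.last m) :=
  Finset.sum_pos'
    (fun k _ => mul_nonneg (hv.altSignConj_inv_nonneg i k) (hw.altSignConj_inv_nonneg k _))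
    ⟨Fin.last m, Finset.mem_univ _,
      mul_pos (hv.altSignConj_inv_pos (Fin.le_last i)) (hw.altSignConj_inv_pos le_rfl)⟩

lemma altSignConj_inv_mul_lt {v w : Matrix (Fin (m + 2)) (Fin (m + 2)) K}
    (hv : IsTotallyPositiveUpper v) (hw : IsTotallyPositiveUpper w) {a b : Fin (m + 2)}
    (hab : a < b) :
    altSignConj v⁻¹ a (Fin.last _) * (altSignConj v⁻¹ * altSignConj w⁻¹) b (Fin.last _) <
      (altSignConj v⁻¹ * altSignConj w⁻¹) a (Fin.last _) * altSignConj v⁻¹ b (Fin.last _) := by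
  rw [← sub_pos, mul_apply, mul_apply, Finset.sum_mul, Finset.mul_sum, ← Finset.sum_sub_distrib]
  refine Finset.sum_pos' (fun k _ => ?_) ⟨a, Finset.mem_univ _, ?_⟩
  · linear_combination mul_nonneg (hw.altSignConj_inv_nonneg k (Fin.last _))
      (hv.altSignConj_inv_minor_nonneg hab (Fin.le_last k))
  · linear_combination mul_pos (hw.altSignConj_inv_pos (Fin.le_last a))
      (hv.altSignConj_inv_minor_pos hab (hab.trans_le (Fin.le_last b)) le_rfl (Fin.le_last b))

end IsTotallyPositiveUpper

lemma neg_mul_div_mul_neg_one_pow_succ {K : Type*} [Field K] (x x' p q : K) (k l : ℕ) :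
    -(x' * ((-1) ^ k * p * (-1) ^ l)) / (x * ((-1) ^ (k + 1) * q * (-1) ^ l)) =
      x' * p / (x * q) := by
  have hs : ((-1 : K) ^ k * (-1) ^ l) ≠ 0 := by simp
  rw [← mul_div_mul_left (x' * p) (x * q) hs]
  ring

lemma mul_div_mul_lt_mul_div_mul {K : Type*} [Field K] [LinearOrder K] [IsStrictOrderedRing K]
    {x x' p q p' q' : K} (hx : 0 < x) (hx' : 0 < x') (hq : 0 < q) (hq' : 0 < q')
    (h : p * q' < p' * q) : x' * p / (x * q) < x' * p' / (x * q') := by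
  rw [mul_div_mul_comm, mul_div_mul_comm]
  exact mul_lt_mul_of_pos_left ((div_lt_div_iff₀ hq hq').2 h) (div_pos hx' hx)

/-- Coordinate form of the inequality `D_a(F₁,F₃,F₂,F₄) < D_a(F₁,F₃,F₂,F₅)` between the
`a`-th double ratios of a positive 5-tuple of flags: with `y i = (v⁻¹)_{i,n}` and
`z i = ((w·v)⁻¹)_{i,n}`, all `y i, z i` are nonzero and
`−(x_{a+1}·y_a)/(x_a·y_{a+1}) < −(x_{a+1}·z_a)/(x_a·z_{a+1})` (0-based indexing below). -/
theorem doubleRatio_strict_inequality_coordinates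
    {K : Type*} [Field K] [LinearOrder K] [IsStrictOrderedRing K] {n : ℕ} (hn : 2 ≤ n)
    (v w : Matrix (Fin n) (Fin n) K)
    (hv : IsTotallyPositiveUpper v) (hw : IsTotallyPositiveUpper w)
    (x : Fin n → K) (hx : ∀ i, 0 < x i) :
    (∀ i : Fin n, v⁻¹ i ⟨n - 1, by omega⟩ ≠ 0 ∧ (w * v)⁻¹ i ⟨n - 1, by omega⟩ ≠ 0) ∧
    ∀ a : ℕ, ∀ ha : a + 1 < n,
      -(x ⟨a + 1, ha⟩ * v⁻¹ ⟨a, by omega⟩ ⟨n - 1, by omega⟩) /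
          (x ⟨a, by omega⟩ * v⁻¹ ⟨a + 1, ha⟩ ⟨n - 1, by omega⟩) <
        -(x ⟨a + 1, ha⟩ * (w * v)⁻¹ ⟨a, by omega⟩ ⟨n - 1, by omega⟩) /
          (x ⟨a, by omega⟩ * (w * v)⁻¹ ⟨a + 1, ha⟩ ⟨n - 1, by omega⟩) := by
  obtain ⟨m, rfl⟩ : ∃ m, n = m + 2 := ⟨n - 2, by omega⟩
  have hL : (⟨m + 2 - 1, by omega⟩ : Fin (m + 2)) = Fin.last (m + 1) := rfl
  have hcol (M : Matrix (Fin (m + 2)) (Fin (m + 2)) K) (i : Fin (m + 2)) :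
      M i (Fin.last _) = (-1) ^ (i : ℕ) * altSignConj M i (Fin.last _) * (-1) ^ (m + 1) := by
    conv_lhs => rw [← altSignConj_altSignConj M]
    rw [altSignConj_apply, Fin.val_last]
  have hprod : altSignConj (w * v)⁻¹ = altSignConj v⁻¹ * altSignConj w⁻¹ := by
    rw [Matrix.mul_inv_rev, altSignConj_mul]
  have hsign (k : ℕ) : (-1 : K) ^ k ≠ 0 := by simp
  refine ⟨fun i => ⟨?_, ?_⟩, fun a ha => ?_⟩
  · rw [hL, hcol v⁻¹]
    exact mul_ne_zero (mul_ne_zero (hsign _) (hv.altSignConj_inv_pos (Fin.le_last i)).ne')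
      (hsign _)
  · rw [hL, hcol (w * v)⁻¹, hprod]
    exact mul_ne_zero (mul_ne_zero (hsign _) (hv.altSignConj_inv_mul_apply_last_pos hw i).ne')
      (hsign _)
  · rw [hL, hcol v⁻¹, hcol v⁻¹, hcol (w * v)⁻¹, hcol (w * v)⁻¹, hprod,
      neg_mul_div_mul_neg_one_pow_succ, neg_mul_div_mul_neg_one_pow_succ]
    exact mul_div_mul_lt_mul_div_mul (hx _) (hx _) (hv.altSignConj_inv_pos (Fin.le_last _))
      (hv.altSignConj_inv_mul_apply_last_pos hw _)
      (hv.altSignConj_inv_mul_lt hw (Fin.mk_lt_mk.2 a.lt_succ_self))
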